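/- arXiv:1801.07619 — 2 statements merged into one kernel-verified Lean document; each statement's English description precedes it below -/
import Mathlib

section
/- Let A ∈ M_n(ℂ) be a positive semidefinite matrix, let X ∈ M_n(ℂ) be arbitrary, and let 0 ≤ α ≤ 1. Then ω( A^α X A^{1−α} + A^{1−α} X A^α ) ≤ ω( A X + X A ). -/
open scoped ComplexOrder

/-- The numerical radius of a complex matrix. -/
noncomputable def numRadius {ι : Type*} [Fintype ι] (A : Matrix ι ι ℂ) : ℝ :=
  sSup {r : ℝ | ∃ x : EuclideanSpace ℂ ι, ‖x‖ = 1 ∧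
    r = ‖(dotProduct (star (x : ι → ℂ)) (A.mulVec x))‖}

/-- `f` is a Kwong function on `(0, ∞)`: for all `m` and all distinct positive
`λ₁, …, λ_m`, the matrix `((f λᵢ + f λⱼ)/(λᵢ + λⱼ))ᵢⱼ` is positive semidefinite. -/
def IsKwong (f : ℝ → ℝ) : Prop :=
  ∀ (m : ℕ) (lam : Fin m → ℝ), (∀ i, 0 < lam i) → Function.Injective lam →
    (Matrix.of fun i j : Fin m => (f (lam i) + f (lam j)) / (lam i + lam j)).PosSemidef

/-- `f` is operator monotone on the interval `J` (in the Loewner order). -/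
def IsOperatorMonotoneOn (f : ℝ → ℝ) (J : Set ℝ) : Prop :=
  ∀ (m : ℕ) (A B : Matrix (Fin m) (Fin m) ℂ), A.IsHermitian → B.IsHermitian →
    spectrum ℝ A ⊆ J → spectrum ℝ B ⊆ J → (B - A).PosSemidef →
    (cfc f B - cfc f A).PosSemidef

set_option linter.unusedSectionVars false
set_option linter.unusedVariables false
set_option linter.unusedTactic false


section NumRadiusAux



variable {ι : Type*} [Fintype ι]

lemma numRadius_nonneg (A : Matrix ι ι ℂ) : 0 ≤ numRadius A :=
  Real.sSup_nonneg (by rintro r ⟨x, hx, rfl⟩; positivity)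

lemma coord_sq_le_one (x : EuclideanSpace ℂ ι) (hx : ‖x‖ = 1) (i : ι) : ‖x i‖ ≤ 1 := by
  have h := EuclideanSpace.norm_eq x
  rw [hx] at h
  have h2 : (1:ℝ)^2 = ∑ j, ‖x j‖^2 := by
    rw [h, Real.sq_sqrt (by positivity)]
  have : ‖x i‖^2 ≤ 1 := by
    rw [one_pow] at h2
    rw [h2]
    exact Finset.single_le_sum (f := fun j => ‖x j‖^2) (fun j _ => by positivity) (Finset.mem_univ i)
  nlinarith [norm_nonneg (x i)]

lemma numRadius_bddAbove (A : Matrix ι ι ℂ) :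
    BddAbove {r : ℝ | ∃ x : EuclideanSpace ℂ ι, ‖x‖ = 1 ∧
      r = ‖dotProduct (star (x : ι → ℂ)) (A.mulVec x)‖} := by
  refine ⟨∑ i, ∑ j, ‖A i j‖, ?_⟩
  rintro r ⟨x, hx, rfl⟩
  unfold dotProduct Matrix.mulVec
  calc ‖∑ i, (star (⇑x) i) * ∑ j, A i j * x j‖
      ≤ ∑ i, ‖(star (⇑x) i) * ∑ j, A i j * x j‖ := by
        exact norm_sum_le _ _
    _ ≤ ∑ i, ∑ j, ‖A i j‖ := by
        apply Finset.sum_le_sum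
        intro i _
        rw [norm_mul]
        calc ‖star (⇑x) i‖ * ‖∑ j, A i j * x j‖
            ≤ 1 * ∑ j, ‖A i j * x j‖ := by
              apply mul_le_mul
              · simpa [Pi.star_apply, Complex.norm_conj] using coord_sq_le_one x hx i
              · exact norm_sum_le _ _
              · positivity
              · norm_num
          _ = ∑ j, ‖A i j‖ * ‖x j‖ := by
              simp [map_mul]
          _ ≤ ∑ j, ‖A i j‖ * 1 := by
              apply Finset.sum_le_sum; intro j _
              exact mul_le_mul_of_nonneg_left (coord_sq_le_one x hx j) (by positivity)
          _ = ∑ j, ‖A i j‖ := by simp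

lemma numRadius_le {A : Matrix ι ι ℂ} {c : ℝ} (hc : 0 ≤ c)
    (h : ∀ x : EuclideanSpace ℂ ι, ‖x‖ = 1 →
      ‖dotProduct (star (x : ι → ℂ)) (A.mulVec x)‖ ≤ c) :
    numRadius A ≤ c :=
  Real.sSup_le (by rintro r ⟨x, hx, rfl⟩; exact h x hx) hc

lemma le_numRadius {A : Matrix ι ι ℂ} (x : EuclideanSpace ℂ ι) (hx : ‖x‖ = 1) :
    ‖dotProduct (star (x : ι → ℂ)) (A.mulVec x)‖ ≤ numRadius A :=
  le_csSup (numRadius_bddAbove A) ⟨x, hx, rfl⟩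


section
variable {ι : Type*} [Fintype ι]

lemma dot_self_eq_norm_sq (z : EuclideanSpace ℂ ι) :
    dotProduct (star (z : ι → ℂ)) (z : ι → ℂ) = ((‖z‖^2 : ℝ) : ℂ) := by
  have h1 : (inner ℂ z z : ℂ) = dotProduct (star (z : ι → ℂ)) (z : ι → ℂ) := by
    rw [EuclideanSpace.inner_eq_star_dotProduct, dotProduct_comm]
  rw [← h1, inner_self_eq_norm_sq_to_K]
  norm_num

lemma dot_smul_eq (A : Matrix ι ι ℂ) (z : EuclideanSpace ℂ ι) (c : ℂ) :
    dotProduct (star ((c • z : EuclideanSpace ℂ ι) : ι → ℂ)) (A.mulVec ((c • z : EuclideanSpace ℂ ι) : ι → ℂ))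
      = (starRingEnd ℂ c) * c * dotProduct (star (z : ι → ℂ)) (A.mulVec z) := by
  have hz : ((c • z : EuclideanSpace ℂ ι) : ι → ℂ) = c • (z : ι → ℂ) := rfl
  rw [hz, star_smul, Matrix.mulVec_smul, smul_dotProduct, dotProduct_smul]
  simp [smul_smul]; ring

end

section
variable {ι : Type*} [Fintype ι] [DecidableEq ι]





-- quadratic bound for general vectors
lemma abs_dot_le_numRadius (A : Matrix ι ι ℂ) (z : EuclideanSpace ℂ ι) :
    ‖dotProduct (star (z : ι → ℂ)) (A.mulVec z)‖ ≤ numRadius A * ‖z‖^2 := by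
  rcases eq_or_ne z 0 with rfl | hz
  · have : ((0 : EuclideanSpace ℂ ι) : ι → ℂ) = 0 := rfl
    simp [this]
  · have hnz : (0:ℝ) < ‖z‖ := norm_pos_iff.mpr hz
    set c : ℂ := ((‖z‖⁻¹ : ℝ) : ℂ) with hc
    have hx : ‖c • z‖ = 1 := by
      simp [c, norm_smul]
      field_simp
    have h := le_numRadius (A := A) (c • z) hx
    rw [dot_smul_eq] at h
    have hcc : (starRingEnd ℂ c) * c = ((‖z‖⁻¹ : ℝ)^2 : ℝ) := by
      simp [c, ← Complex.ofReal_mul, Complex.conj_ofReal]; norm_num; ring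
    rw [hcc, norm_mul] at h
    have habs : ‖(((‖z‖⁻¹:ℝ)^2 : ℝ) : ℂ)‖ = (‖z‖⁻¹)^2 := by
      rw [Complex.norm_real, Real.norm_eq_abs, abs_of_nonneg (by positivity)]
    rw [habs] at h
    calc ‖dotProduct (star (z : ι → ℂ)) (A.mulVec z)‖
        = (‖z‖^2) * ((‖z‖⁻¹)^2 * ‖dotProduct (star (z : ι → ℂ)) (A.mulVec z)‖) := by
          field_simp
      _ ≤ ‖z‖^2 * numRadius A := by
          apply mul_le_mul_of_nonneg_left h (by positivity)
      _ = numRadius A * ‖z‖^2 := by ring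

-- unitary invariance
lemma numRadius_unitary_conj (U : Matrix.unitaryGroup ι ℂ) (M : Matrix ι ι ℂ) :
    numRadius ((U : Matrix ι ι ℂ) * M * star (U : Matrix ι ι ℂ)) = numRadius M := by
  have key : ∀ (V : Matrix.unitaryGroup ι ℂ) (N : Matrix ι ι ℂ),
      numRadius ((V : Matrix ι ι ℂ) * N * star (V : Matrix ι ι ℂ)) ≤ numRadius N := by
    intro V N
    apply Real.sSup_le _ (numRadius_nonneg N)
    rintro r ⟨x, hx, rfl⟩
    set Vm := (V : Matrix ι ι ℂ) with hVm
    have hVV : Vm * star Vm = 1 := Matrix.mem_unitaryGroup_iff.mp V.2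
    have hVV' : star Vm * Vm = 1 := Matrix.mem_unitaryGroup_iff'.mp V.2
    set w : ι → ℂ := (star Vm).mulVec x with hw
    have hstar : star w = Matrix.vecMul (star (x : ι → ℂ)) Vm := by
      rw [hw, Matrix.star_mulVec, Matrix.star_eq_conjTranspose, Matrix.conjTranspose_conjTranspose]
    have hdot : dotProduct (star (x : ι → ℂ)) ((Vm * N * star Vm).mulVec x)
        = dotProduct (star w) (N.mulVec w) := by
      rw [hstar, hw, Matrix.mul_assoc, ← Matrix.mulVec_mulVec, ← Matrix.mulVec_mulVec,
        Matrix.dotProduct_mulVec (star (x : ι → ℂ)) Vm]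
    set y : EuclideanSpace ℂ ι := (WithLp.equiv 2 (ι → ℂ)).symm w with hy
    have hself : dotProduct (star w) w = ((‖y‖^2 : ℝ) : ℂ) := dot_self_eq_norm_sq y
    have hselfx : dotProduct (star (x : ι → ℂ)) (x : ι → ℂ) = ((‖x‖^2 : ℝ) : ℂ) :=
      dot_self_eq_norm_sq x
    have hww : dotProduct (star w) w
        = dotProduct (star (x : ι → ℂ)) (x : ι → ℂ) := by
      conv_lhs => rw [hstar, hw]
      rw [← Matrix.dotProduct_mulVec, Matrix.mulVec_mulVec, hVV, Matrix.one_mulVec]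
    have hny : ‖y‖ = 1 := by
      rw [hself, hselfx, hx] at hww
      have h3 : (‖y‖^2 : ℝ) = 1^2 := by exact_mod_cast hww
      nlinarith [norm_nonneg y]
    have hle : ‖dotProduct (star w) (N.mulVec w)‖ ≤ numRadius N :=
      le_numRadius y hny
    rw [hdot]
    exact hle
  have h2 := key (star U) ((U : Matrix ι ι ℂ) * M * star (U : Matrix ι ι ℂ))
  have hcoe : ((star U : Matrix.unitaryGroup ι ℂ) : Matrix ι ι ℂ) = star (U : Matrix ι ι ℂ) := rfl
  rw [hcoe, star_star] at h2
  have hVV' : (star (U:Matrix ι ι ℂ)) * (U:Matrix ι ι ℂ) = 1 := Matrix.mem_unitaryGroup_iff'.mp U.2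
  have hM : (star (U:Matrix ι ι ℂ)) * ((U:Matrix ι ι ℂ) * M * star (U:Matrix ι ι ℂ)) * (U:Matrix ι ι ℂ) = M := by
    simp only [← Matrix.mul_assoc]
    rw [hVV', Matrix.one_mul, Matrix.mul_assoc, hVV', Matrix.mul_one]
  rw [hM] at h2
  exact le_antisymm (key U M) h2

end

end NumRadiusAux

section KernelAux
open MeasureTheory Set


lemma integral_exp_neg_mul_Ioi_zero {b : ℝ} (hb : 0 < b) :
    ∫ t in Ioi (0:ℝ), Real.exp (-(b * t)) = b⁻¹ := by
  have h := integral_comp_mul_left_Ioi (fun s => Real.exp (-s)) 0 hb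
  simp only [mul_zero] at h
  rw [h, integral_exp_neg_Ioi, neg_zero, Real.exp_zero, smul_eq_mul, mul_one]

lemma exp_term_integrable {b : ℝ} (hb : 0 < b) (a : ℝ) :
    IntegrableOn (fun t : ℝ => a * Real.exp (-(b * t))) (Ioi (0:ℝ)) := by
  have := (exp_neg_integrableOn_Ioi 0 hb).const_mul a
  simpa [neg_mul, IntegrableOn] using this

lemma cauchy_sum_nonneg {ι : Type*} [Fintype ι] (c : ι → ℝ) (hc : ∀ i, 0 < c i) (w : ι → ℝ) :
    0 ≤ ∑ i, ∑ j, w i * w j / (c i + c j) := by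
  have heq : ∀ (i j : ι) (t : ℝ), (w i * Real.exp (-(c i * t))) * (w j * Real.exp (-(c j * t)))
      = (w i * w j) * Real.exp (-((c i + c j) * t)) := by
    intro i j t
    rw [show -((c i + c j) * t) = -(c i * t) + -(c j * t) by ring, Real.exp_add]
    ring
  calc (0:ℝ) ≤ ∫ t in Ioi (0:ℝ), (∑ i, w i * Real.exp (-(c i * t)))^2 :=
        setIntegral_nonneg measurableSet_Ioi (fun t _ => sq_nonneg _)
    _ = ∑ i, ∑ j, w i * w j / (c i + c j) := by
        have hsq : ∀ t : ℝ, (∑ i, w i * Real.exp (-(c i * t)))^2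
            = ∑ i, ∑ j, (w i * w j) * Real.exp (-((c i + c j) * t)) := by
          intro t
          rw [sq, Finset.sum_mul_sum]
          exact Finset.sum_congr rfl fun i _ => Finset.sum_congr rfl fun j _ => heq i j t
        simp_rw [hsq]
        rw [integral_finset_sum _ (fun i _ => integrable_finset_sum _
          (fun j _ => exp_term_integrable (by have := hc i; have := hc j; positivity) _))]
        refine Finset.sum_congr rfl fun i _ => ?_
        rw [integral_finset_sum _ (fun j _ => exp_term_integrable
          (by have := hc i; have := hc j; positivity) _)]
        refine Finset.sum_congr rfl fun j _ => ?_
        rw [MeasureTheory.integral_const_mul, integral_exp_neg_mul_Ioi_zero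
          (by have := hc i; have := hc j; positivity), div_eq_mul_inv]



section
variable {γ : ℝ} (hγ0 : 0 < γ) (hγ1 : γ < 1)

noncomputable def gfun (γ lam : ℝ) (s : ℝ) : ℝ := s ^ (γ - 1) * (lam / (lam + s))

lemma gfun_nonneg {γ lam : ℝ} (hlam : 0 < lam) {s : ℝ} (hs : 0 < s) : 0 ≤ gfun γ lam s :=
  mul_nonneg (Real.rpow_nonneg hs.le _) (div_nonneg hlam.le (by linarith))

include hγ0 hγ1 in
lemma gfun_integrable {lam : ℝ} (hlam : 0 < lam) :
    IntegrableOn (gfun γ lam) (Ioi (0:ℝ)) := by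
  have hmeas : ∀ T : Set ℝ, T ⊆ Ioi 0 → MeasurableSet T →
      AEStronglyMeasurable (gfun γ lam) (volume.restrict T) := by
    intro T hT hTm
    apply ContinuousOn.aestronglyMeasurable _ hTm
    intro s hs
    have hs0 : 0 < s := hT hs
    apply ContinuousWithinAt.mul
    · exact ((Real.continuousAt_rpow_const s _ (Or.inl hs0.ne')).continuousWithinAt)
    · exact (continuousAt_const.div (continuousAt_const.add continuousAt_id)
        (show 0 < lam + s by linarith).ne').continuousWithinAt
  have h1 : IntegrableOn (gfun γ lam) (Ioc (0:ℝ) 1) := by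
    have hbound : IntegrableOn (fun s : ℝ => s ^ (γ - 1)) (Ioc (0:ℝ) 1) := by
      have := intervalIntegral.intervalIntegrable_rpow' (a := 0) (b := 1) (r := γ - 1)
        (by linarith)
      rwa [intervalIntegrable_iff_integrableOn_Ioc_of_le (by norm_num)] at this
    apply Integrable.mono hbound
      (hmeas _ (Ioc_subset_Ioi_self) measurableSet_Ioc)
    · filter_upwards [ae_restrict_mem measurableSet_Ioc] with s hs
      have hs0 : 0 < s := hs.1
      have e1 : 0 ≤ s ^ (γ - 1) := Real.rpow_nonneg hs0.le _
      have hfrac : lam / (lam + s) ≤ 1 := by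
        rw [div_le_one (by positivity)]; linarith
      have e2 : 0 ≤ lam / (lam + s) := div_nonneg hlam.le (by linarith)
      rw [Real.norm_eq_abs, Real.norm_eq_abs, abs_of_nonneg (gfun_nonneg hlam hs0),
        abs_of_nonneg e1]
      unfold gfun
      nlinarith
  have h2 : IntegrableOn (gfun γ lam) (Ioi (1:ℝ)) := by
    have hbound : IntegrableOn (fun s : ℝ => lam * s ^ (γ - 2)) (Ioi (1:ℝ)) :=
      (integrableOn_Ioi_rpow_of_lt (by linarith) one_pos).const_mul lam
    apply Integrable.mono hbound (hmeas _ (fun s hs => mem_Ioi.mpr (lt_trans one_pos (mem_Ioi.mp hs))) measurableSet_Ioi)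
    · filter_upwards [ae_restrict_mem measurableSet_Ioi] with s hs
      have hs1 : (1:ℝ) < s := hs
      have hs0 : 0 < s := lt_trans one_pos hs1
      have e1 : 0 ≤ s ^ (γ - 2) := Real.rpow_nonneg hs0.le _
      rw [Real.norm_eq_abs, Real.norm_eq_abs, abs_of_nonneg (gfun_nonneg hlam hs0),
        abs_of_nonneg (by positivity)]
      unfold gfun
      have key : s ^ (γ - 2) = s ^ (γ - 1) / s := by
        rw [eq_div_iff hs0.ne', ← Real.rpow_add_one hs0.ne']
        norm_num
        ring_nf
      rw [key]
      calc s ^ (γ-1) * (lam / (lam + s)) ≤ s ^ (γ-1) * (lam / s) := by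
            gcongr
            linarith
        _ = lam * (s ^ (γ-1)/s) := by ring
  have := h1.union h2
  rwa [Ioc_union_Ioi_eq_Ioi (by norm_num : (0:ℝ) ≤ 1)] at this

include hγ0 hγ1 in
lemma gfun_integral_eq {lam : ℝ} (hlam : 0 < lam) :
    ∫ s in Ioi (0:ℝ), gfun γ lam s = lam ^ γ * ∫ s in Ioi (0:ℝ), gfun γ 1 s := by
  have h := integral_comp_mul_left_Ioi (gfun γ lam) 0 hlam
  rw [mul_zero] at h
  have h2 : ∀ u ∈ Ioi (0:ℝ), gfun γ lam (lam * u) = lam ^ (γ - 1) * gfun γ 1 u := by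
    intro u hu
    have hu0 : 0 < u := hu
    unfold gfun
    rw [Real.mul_rpow hlam.le hu0.le]
    have : lam / (lam + lam * u) = 1 / (1 + u) := by
      rw [div_eq_div_iff (by positivity) (by positivity)]; ring
    rw [this]; ring
  rw [setIntegral_congr_fun measurableSet_Ioi h2] at h
  rw [MeasureTheory.integral_const_mul, smul_eq_mul] at h
  have hpow : lam * (lam ^ (γ - 1)) = lam ^ γ := by
    nth_rewrite 1 [← Real.rpow_one lam]
    rw [← Real.rpow_add hlam]; norm_num
  have h' := congrArg (fun z => lam * z) h
  rw [← mul_assoc, ← mul_assoc, mul_inv_cancel₀ hlam.ne', one_mul, hpow] at h'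
  exact h'.symm

include hγ0 hγ1 in
lemma gfun_one_pos : 0 < ∫ s in Ioi (0:ℝ), gfun γ 1 s := by
  rw [setIntegral_pos_iff_support_of_nonneg_ae]
  · apply lt_of_lt_of_le _ (measure_mono (?_ : Ioi (1:ℝ) ⊆ _))
    · rw [Real.volume_Ioi]; norm_num
    · intro s hs
      have hs0 : 0 < s := lt_trans one_pos hs
      constructor
      · simp only [Function.mem_support]
        exact ne_of_gt (by
          unfold gfun
          have : 0 < s ^ (γ-1) := Real.rpow_pos_of_pos hs0 _
          positivity)
      · exact hs0
  · filter_upwards [ae_restrict_mem measurableSet_Ioi] with s hs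
    exact gfun_nonneg one_pos hs
  · exact gfun_integrable hγ0 hγ1 one_pos

end





lemma pow_kernel_sum_nonneg {ι : Type*} [Fintype ι] {γ : ℝ} (hγ0 : 0 ≤ γ) (hγ1 : γ < 1)
    (lam : ι → ℝ) (h : ∀ i, 0 < lam i) (v : ι → ℝ) :
    0 ≤ ∑ i, ∑ j, v i * v j * ((lam i ^ γ + lam j ^ γ) / (lam i + lam j)) := by
  rcases eq_or_lt_of_le hγ0 with rfl | hγ0'
  · simp only [Real.rpow_zero]
    have h2 := cauchy_sum_nonneg lam h v
    have he : ∀ i j : ι, v i * v j * (((1:ℝ) + 1)/(lam i + lam j))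
        = 2 * (v i * v j / (lam i + lam j)) := by intro i j; ring
    simp_rw [he, ← Finset.mul_sum]
    linarith
  · set C := ∫ s in Ioi (0:ℝ), gfun γ 1 s with hC
    have hCpos : 0 < C := gfun_one_pos hγ0' hγ1
    rw [← mul_nonneg_iff_of_pos_right hCpos]
    have hterm : ∀ i j : ι, v i * v j * ((lam i ^ γ + lam j ^ γ)/(lam i + lam j)) * C
        = ∫ s in Ioi (0:ℝ), (v i * v j / (lam i + lam j))
            * (gfun γ (lam i) s + gfun γ (lam j) s) := by
      intro i j
      rw [MeasureTheory.integral_const_mul,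
        integral_add (gfun_integrable hγ0' hγ1 (h i)) (gfun_integrable hγ0' hγ1 (h j)),
        gfun_integral_eq hγ0' hγ1 (h i), gfun_integral_eq hγ0' hγ1 (h j), ← hC]
      have hne : lam i + lam j ≠ 0 := by have := h i; have := h j; positivity
      field_simp
    have hint : ∀ i j : ι, IntegrableOn (fun s => (v i * v j / (lam i + lam j))
        * (gfun γ (lam i) s + gfun γ (lam j) s)) (Ioi (0:ℝ)) := fun i j =>
      ((gfun_integrable hγ0' hγ1 (h i)).add (gfun_integrable hγ0' hγ1 (h j))).const_mul _
    have hsum : (∑ i, ∑ j, v i * v j * ((lam i ^ γ + lam j ^ γ)/(lam i + lam j))) * C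
        = ∫ s in Ioi (0:ℝ), ∑ i, ∑ j, (v i * v j / (lam i + lam j))
            * (gfun γ (lam i) s + gfun γ (lam j) s) := by
      rw [integral_finset_sum _ (fun i _ => integrable_finset_sum _ (fun j _ => hint i j)),
        Finset.sum_mul]
      refine Finset.sum_congr rfl fun i _ => ?_
      rw [integral_finset_sum _ (fun j _ => hint i j), Finset.sum_mul]
      exact Finset.sum_congr rfl fun j _ => hterm i j
    rw [hsum]
    apply setIntegral_nonneg measurableSet_Ioi
    intro s hs
    have hs0 : (0:ℝ) < s := hs
    set w : ι → ℝ := fun i => v i * (lam i / (lam i + s)) with hw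
    set u : ι → ℝ := fun i => v i / (lam i + s) with hu
    have hptwise : ∀ i j : ι, (v i * v j / (lam i + lam j))
        * (gfun γ (lam i) s + gfun γ (lam j) s)
        = 2 * s ^ (γ - 1) * (w i * w j / (lam i + lam j))
          + (s ^ (γ-1) * s) * (u i * u j) := by
      intro i j
      have hi := h i; have hj := h j
      have h1 : lam i + s ≠ 0 := by positivity
      have h2 : lam j + s ≠ 0 := by positivity
      have h3 : lam i + lam j ≠ 0 := by positivity
      unfold gfun
      simp only [hw, hu]
      field_simp
      ring
    simp_rw [hptwise]
    have hsplit : ∑ i, ∑ j, (2 * s ^ (γ - 1) * (w i * w j / (lam i + lam j))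
          + (s ^ (γ-1) * s) * (u i * u j))
        = 2 * s ^ (γ-1) * (∑ i, ∑ j, w i * w j / (lam i + lam j))
          + (s ^ (γ-1) * s) * ((∑ i, u i) * (∑ j, u j)) := by
      rw [Finset.sum_mul_sum]
      simp only [Finset.mul_sum, Finset.sum_add_distrib]
    rw [hsplit]
    have e1 : (0:ℝ) ≤ s ^ (γ-1) := Real.rpow_nonneg hs0.le _
    have e2 := cauchy_sum_nonneg lam h w
    have e3 := mul_nonneg (mul_nonneg (by norm_num : (0:ℝ) ≤ 2) e1) e2
    have e4 := mul_nonneg (mul_nonneg e1 hs0.le) (mul_self_nonneg (∑ i, u i))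
    linarith

end KernelAux



set_option maxHeartbeats 2000000 in
lemma key_estimate {n : ℕ} (K : Matrix (Fin n) (Fin n) ℝ) (hK : K.PosSemidef)
    (hKdiag : ∀ i, K i i ≤ 1) (M₁ M₂ : Matrix (Fin n) (Fin n) ℂ)
    (hM₁ : ∀ i j, M₁ i j = (K i j : ℂ) * M₂ i j) :
    numRadius M₁ ≤ numRadius M₂ := by
  open scoped MatrixOrder in
  obtain ⟨B, hB⟩ := CStarAlgebra.nonneg_iff_eq_star_mul_self.mp hK.nonneg
  have hKentry : ∀ i j, K i j = ∑ k, B k i * B k j := by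
    intro i j
    rw [hB, Matrix.mul_apply]
    simp [Matrix.conjTranspose_apply]
  apply numRadius_le (numRadius_nonneg M₂)
  intro x hx
  have hxsum : ∑ i, ‖x i‖^2 = 1 := by
    have := EuclideanSpace.norm_eq x
    rw [hx] at this
    have h2 : (1:ℝ)^2 = ∑ i, ‖x i‖^2 := by rw [this, Real.sq_sqrt (by positivity)]
    linarith [h2]
  set z : Fin n → EuclideanSpace ℂ (Fin n) :=
    fun k => (WithLp.equiv 2 (Fin n → ℂ)).symm (fun i => (B k i : ℂ) * x i) with hz
  have hzc : ∀ k, (z k : Fin n → ℂ) = fun i => (B k i : ℂ) * x i := fun k => rfl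
  have claim1 : dotProduct (star (x : Fin n → ℂ)) (M₁.mulVec x)
      = ∑ k, dotProduct (star (z k : Fin n → ℂ)) (M₂.mulVec (z k)) := by
    have hF : ∀ i j, (M₁ i j) = (∑ k, (B k i : ℂ) * (B k j : ℂ)) * M₂ i j := by
      intro i j; rw [hM₁ i j, hKentry i j]; push_cast; ring
    simp only [dotProduct, Matrix.mulVec, hzc, Pi.star_apply, hF, star_mul',
      Complex.star_def, Complex.conj_ofReal]
    simp only [Finset.mul_sum, Finset.sum_mul]
    conv_rhs => rw [Finset.sum_comm]
    refine Finset.sum_congr rfl fun i _ => ?_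
    rw [Finset.sum_comm]
    refine Finset.sum_congr rfl fun j _ => ?_
    refine Finset.sum_congr rfl fun k _ => ?_
    ring
  have claim2 : ∑ k, (‖z k‖^2) ≤ 1 := by
    have hnorm : ∀ k, ‖z k‖^2 = ∑ i, (B k i)^2 * ‖x i‖^2 := by
      intro k
      rw [EuclideanSpace.norm_eq, Real.sq_sqrt (by positivity)]
      refine Finset.sum_congr rfl fun i _ => ?_
      have : ‖(z k) i‖ = |B k i| * ‖x i‖ := by
        rw [hzc k]
        simp [norm_mul, Complex.norm_real]
      rw [this, mul_pow, sq_abs]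
    calc ∑ k, ‖z k‖^2 = ∑ i, (∑ k, (B k i)^2) * ‖x i‖^2 := by
          simp only [hnorm, Finset.sum_mul]
          rw [Finset.sum_comm]
      _ ≤ ∑ i, 1 * ‖x i‖^2 := by
          apply Finset.sum_le_sum
          intro i _
          apply mul_le_mul_of_nonneg_right _ (by positivity)
          have := hKdiag i
          rw [hKentry i i] at this
          simpa [sq] using this
      _ = 1 := by simpa using hxsum
  calc ‖dotProduct (star (x : Fin n → ℂ)) (M₁.mulVec x)‖
      ≤ ∑ k, ‖dotProduct (star (z k : Fin n → ℂ)) (M₂.mulVec (z k))‖ := by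
        rw [claim1]; exact norm_sum_le _ _
    _ ≤ ∑ k, numRadius M₂ * ‖z k‖^2 := by
        exact Finset.sum_le_sum fun k _ => abs_dot_le_numRadius M₂ (z k)
    _ = numRadius M₂ * ∑ k, ‖z k‖^2 := by rw [Finset.mul_sum]
    _ ≤ numRadius M₂ * 1 := by
        exact mul_le_mul_of_nonneg_left claim2 (numRadius_nonneg M₂)
    _ = numRadius M₂ := mul_one _


noncomputable def cEnt {n : ℕ} (α : ℝ) (lam : Fin n → ℝ) (i j : Fin n) : ℝ :=
  lam i ^ α * lam j ^ (1-α) + lam i ^ (1-α) * lam j ^ α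

noncomputable def Kmat {n : ℕ} (α : ℝ) (lam : Fin n → ℝ) : Matrix (Fin n) (Fin n) ℝ :=
  Matrix.of fun i j =>
    if 0 < lam i ∧ 0 < lam j then cEnt α lam i j / (lam i + lam j) else 0

section
variable {n : ℕ} {lam : Fin n → ℝ} {α : ℝ}

lemma cEnt_factor (hα0 : 0 < α) (hα1 : α < 1) {i j : Fin n}
    (hi : 0 < lam i) (hj : 0 < lam j) :
    cEnt α lam i j
      = lam i ^ min α (1-α) * lam j ^ min α (1-α)
        * (lam i ^ (1 - 2 * min α (1-α)) + lam j ^ (1 - 2 * min α (1-α))) := by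
  rcases le_total α (1-α) with hle | hle
  · rw [min_eq_left hle]
    have hii : lam i ^ α * lam i ^ (1 - 2*α) = lam i ^ (1-α) := by
      rw [← Real.rpow_add hi]; congr 1; ring
    have hjj : lam j ^ α * lam j ^ (1 - 2*α) = lam j ^ (1-α) := by
      rw [← Real.rpow_add hj]; congr 1; ring
    unfold cEnt
    linear_combination (-(lam j ^ α)) * hii + (-(lam i ^ α)) * hjj
  · rw [min_eq_right hle]
    have hii : lam i ^ (1-α) * lam i ^ (1 - 2*(1-α)) = lam i ^ α := by
      rw [← Real.rpow_add hi]; congr 1; ring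
    have hjj : lam j ^ (1-α) * lam j ^ (1 - 2*(1-α)) = lam j ^ α := by
      rw [← Real.rpow_add hj]; congr 1; ring
    unfold cEnt
    linear_combination (-(lam j ^ (1-α))) * hii + (-(lam i ^ (1-α))) * hjj

lemma cEnt_eq_K_mul (hlam : ∀ i, 0 ≤ lam i) (hα0 : 0 < α) (hα1 : α < 1) (i j : Fin n) :
    (cEnt α lam i j) = Kmat α lam i j * (lam i + lam j) := by
  unfold Kmat
  by_cases h : 0 < lam i ∧ 0 < lam j
  · rw [Matrix.of_apply, if_pos h, div_mul_cancel₀]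
    have := h.1; have := h.2; positivity
  · rw [Matrix.of_apply, if_neg h, zero_mul]
    have : lam i = 0 ∨ lam j = 0 := by
      rcases not_and_or.mp h with h' | h'
      · exact Or.inl (le_antisymm (not_lt.mp h') (hlam i))
      · exact Or.inr (le_antisymm (not_lt.mp h') (hlam j))
    unfold cEnt
    rcases this with h' | h' <;>
      rw [h', Real.zero_rpow (by linarith), Real.zero_rpow (by linarith)] <;> ring

lemma Kmat_diag_le_one (hα0 : 0 < α) (hα1 : α < 1) (i : Fin n) : Kmat α lam i i ≤ 1 := by
  unfold Kmat
  rw [Matrix.of_apply]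
  by_cases h : 0 < lam i ∧ 0 < lam i
  · rw [if_pos h]
    have hi := h.1
    have hc : cEnt α lam i i = 2 * lam i := by
      unfold cEnt
      rw [← Real.rpow_add hi, ← Real.rpow_add hi]
      norm_num
      ring
    rw [hc]
    rw [div_le_one (by linarith)]
    linarith
  · rw [if_neg h]; norm_num

lemma Kmat_posSemidef (hlam : ∀ i, 0 ≤ lam i) (hα0 : 0 < α) (hα1 : α < 1) :
    (Kmat α lam).PosSemidef := by
  have hsym : ∀ i j, Kmat α lam j i = Kmat α lam i j := by
    intro i j
    unfold Kmat
    rw [Matrix.of_apply, Matrix.of_apply]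
    by_cases hc : 0 < lam i ∧ 0 < lam j
    · rw [if_pos hc, if_pos (And.intro hc.2 hc.1), add_comm (lam j)]
      unfold cEnt
      ring_nf
    · rw [if_neg (fun hcc => hc ⟨hcc.2, hcc.1⟩), if_neg hc]
  rw [Matrix.posSemidef_iff_dotProduct_mulVec]
  constructor
  · ext i j
    rw [Matrix.conjTranspose_apply, star_trivial, hsym]
  · intro x
    rw [star_trivial]
    set e := min α (1-α) with he
    have he0 : 0 < e := lt_min hα0 (by linarith)
    have he2 : e ≤ 1/2 := by
      rcases le_total α (1-α) with h | h
      · rw [he, min_eq_left h]; linarith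
      · rw [he, min_eq_right h]; linarith
    set γ := 1 - 2 * e with hγ
    have hγ0 : 0 ≤ γ := by rw [hγ]; linarith
    have hγ1 : γ < 1 := by rw [hγ]; linarith
    set P : Finset (Fin n) := Finset.univ.filter (fun i => 0 < lam i) with hP
    have hmemP : ∀ i, i ∈ P ↔ 0 < lam i := by
      intro i; rw [hP, Finset.mem_filter]; simp
    have hzero : ∀ i j, ¬(0 < lam i ∧ 0 < lam j) → x i * (Kmat α lam i j * x j) = 0 := by
      intro i j h
      unfold Kmat
      rw [Matrix.of_apply, if_neg h, zero_mul, mul_zero]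
    have h0 : dotProduct x ((Kmat α lam).mulVec x)
        = ∑ i, ∑ j, x i * (Kmat α lam i j * x j) := by
      simp only [Matrix.mulVec, dotProduct, Finset.mul_sum]
    have hexpand : (∑ i, ∑ j, x i * (Kmat α lam i j * x j))
        = ∑ i ∈ P, ∑ j ∈ P, x i * (Kmat α lam i j * x j) := by
      rw [show (∑ i, ∑ j, x i * (Kmat α lam i j * x j))
          = ∑ i ∈ P, ∑ j, x i * (Kmat α lam i j * x j) from
        (Finset.sum_subset (Finset.filter_subset _ _) (fun i _ hi => Finset.sum_eq_zero
          (fun j _ => hzero i j (fun hc => hi ((hmemP i).mpr hc.1))))).symm]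
      refine Finset.sum_congr rfl fun i _ => ?_
      exact (Finset.sum_subset (Finset.filter_subset _ _) (fun j _ hj =>
        hzero i j (fun hc => hj ((hmemP j).mpr hc.2)))).symm
    have hsub : ∑ i ∈ P, ∑ j ∈ P, x i * (Kmat α lam i j * x j)
        = ∑ i : {i : Fin n // 0 < lam i}, ∑ j : {j : Fin n // 0 < lam j},
            (x i * lam i ^ e) * (x j * lam j ^ e)
              * ((lam (i:Fin n) ^ γ + lam (j:Fin n) ^ γ)/(lam (i:Fin n) + lam (j:Fin n))) := by
      rw [Finset.sum_subtype P hmemP]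
      refine Finset.sum_congr rfl fun i _ => ?_
      rw [Finset.sum_subtype P hmemP]
      refine Finset.sum_congr rfl fun j _ => ?_
      have hi := i.2
      have hj := j.2
      have hK : Kmat α lam i j = cEnt α lam i j / (lam (i:Fin n) + lam (j:Fin n)) := by
        unfold Kmat; rw [Matrix.of_apply, if_pos ⟨hi, hj⟩]
      rw [hK, cEnt_factor hα0 hα1 hi hj, ← he, ← hγ]
      have hd : lam (i:Fin n) + lam (j:Fin n) ≠ 0 := by positivity
      field_simp
    rw [h0, hexpand, hsub]
    exact pow_kernel_sum_nonneg hγ0 hγ1 _ (fun i => i.2) _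
end








theorem stmt_2 {n : ℕ} (A X : Matrix (Fin n) (Fin n) ℂ) (hA : A.PosSemidef)
    (α : ℝ) (hα : α ∈ Set.Icc (0 : ℝ) 1) :
    numRadius (cfc (fun x : ℝ => x ^ α) A * X * cfc (fun x : ℝ => x ^ (1 - α)) A +
        cfc (fun x : ℝ => x ^ (1 - α)) A * X * cfc (fun x : ℝ => x ^ α) A) ≤
      numRadius (A * X + X * A) := by
  have hsa : IsSelfAdjoint A := hA.1
  obtain ⟨hα0, hα1⟩ := hα
  have h1 : cfc (fun _ : ℝ => (1:ℝ)) A = 1 := cfc_const_one ℝ A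
  rcases eq_or_lt_of_le hα0 with rfl | hα0'
  · simp only [sub_zero, Real.rpow_one, Real.rpow_zero, cfc_id' ℝ A, h1,
      Matrix.one_mul, Matrix.mul_one]
    rw [add_comm (X * A)]
  rcases eq_or_lt_of_le hα1 with rfl | hα1'
  · simp only [sub_self, Real.rpow_one, Real.rpow_zero, cfc_id' ℝ A, h1,
      Matrix.one_mul, Matrix.mul_one]
    exact le_refl _
  -- main case
  have hH : A.IsHermitian := hA.1
  set lam : Fin n → ℝ := hH.eigenvalues with hlamdef
  have hlam : ∀ i, 0 ≤ lam i := hA.eigenvalues_nonneg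
  set Ug := hH.eigenvectorUnitary with hUg
  set U : Matrix (Fin n) (Fin n) ℂ := (Ug : Matrix (Fin n) (Fin n) ℂ) with hUdef
  have hU1 : U * star U = 1 := Matrix.mem_unitaryGroup_iff.mp Ug.2
  have hU2 : star U * U = 1 := Matrix.mem_unitaryGroup_iff'.mp Ug.2
  have hcfc : ∀ f : ℝ → ℝ, cfc f A
      = U * Matrix.diagonal (fun i => ((f (lam i) : ℝ) : ℂ)) * star U := by
    intro f
    rw [hH.cfc_eq f]
    rfl
  have hAeq : A = U * Matrix.diagonal (fun i => ((lam i : ℝ) : ℂ)) * star U := by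
    have := hH.spectral_theorem
    rw [this]
    rfl
  set Y : Matrix (Fin n) (Fin n) ℂ := star U * X * U with hYdef
  have hX : X = U * Y * star U := by
    rw [hYdef]
    simp only [← Matrix.mul_assoc]
    rw [hU1, Matrix.one_mul, Matrix.mul_assoc, hU1, Matrix.mul_one]
  have hmul : ∀ M N : Matrix (Fin n) (Fin n) ℂ,
      (U * M * star U) * (U * N * star U) = U * (M * N) * star U := by
    intro M N
    calc (U * M * star U) * (U * N * star U)
        = U * M * (star U * U) * N * star U := by simp only [Matrix.mul_assoc]
      _ = U * (M * N) * star U := by rw [hU2, Matrix.mul_one]; simp only [Matrix.mul_assoc]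
  set D₁ := Matrix.diagonal (fun i => ((lam i ^ α : ℝ) : ℂ)) with hD1
  set D₂ := Matrix.diagonal (fun i => ((lam i ^ (1-α) : ℝ) : ℂ)) with hD2
  set D := Matrix.diagonal (fun i => ((lam i : ℝ) : ℂ)) with hD
  have hLHS : cfc (fun x : ℝ => x ^ α) A * X * cfc (fun x : ℝ => x ^ (1 - α)) A +
        cfc (fun x : ℝ => x ^ (1 - α)) A * X * cfc (fun x : ℝ => x ^ α) A
      = U * (D₁ * Y * D₂ + D₂ * Y * D₁) * star U := by
    rw [hcfc, hcfc, hX]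
    rw [Matrix.mul_add]
    rw [Matrix.add_mul]
    refine congrArg₂ (· + ·) ?_ ?_
    · rw [hmul, hmul, Matrix.mul_assoc D₁]
    · rw [hmul, hmul, Matrix.mul_assoc D₂]
  have hRHS : A * X + X * A = U * (D * Y + Y * D) * star U := by
    rw [hAeq, hX, Matrix.mul_add, Matrix.add_mul, hmul, hmul]
  rw [hLHS, hRHS, numRadius_unitary_conj Ug, numRadius_unitary_conj Ug]
  apply key_estimate (Kmat α lam) (Kmat_posSemidef hlam hα0' hα1')
    (Kmat_diag_le_one hα0' hα1')
  intro i j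
  have hc := congrArg (fun t : ℝ => (t : ℂ)) (cEnt_eq_K_mul hlam hα0' hα1' i j)
  unfold cEnt at hc
  push_cast at hc
  simp only [hD1, hD2, hD, Matrix.add_apply, Matrix.mul_diagonal, Matrix.diagonal_mul]
  push_cast
  linear_combination Y i j * hc
end

section
/- Let λ₁, …, λₙ be positive real numbers, let r ∈ [−1, 1], and let −2 < t ≤ 2. Then the n×n matrix L with (i,j) entry ( λᵢ^r + λⱼ^r ) / ( λᵢ² + t λᵢ λⱼ + λⱼ² ) is positive semidefinite. -/
open scoped ComplexOrder

section StmtThirteenAux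

open MeasureTheory Real Set

private lemma posSemidef_of_quad (n : ℕ) (M : Matrix (Fin n) (Fin n) ℝ)
    (hsymm : ∀ i j, M i j = M j i)
    (hq : ∀ x : Fin n → ℝ, 0 ≤ ∑ i, ∑ j, x i * x j * M i j) : M.PosSemidef := by
  constructor
  · ext i j
    simp only [Matrix.conjTranspose_apply, star_trivial]
    exact hsymm j i
  · intro x
    have h := hq x
    have : dotProduct (star x) (M.mulVec x) = ∑ i, ∑ j, x i * x j * M i j := by
      simp only [dotProduct, Matrix.mulVec, Pi.star_apply, star_trivial,
        Finset.mul_sum]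
      exact Finset.sum_congr rfl fun i _ => Finset.sum_congr rfl fun j _ => by ring
    simp only [Finsupp.sum_fintype, zero_mul, mul_zero, star_zero, Finset.sum_const_zero,
      forall_const, star_trivial, implies_true]
    exact le_of_le_of_eq h (Finset.sum_congr rfl fun i _ => Finset.sum_congr rfl fun j _ => by ring)


-- integrability of u^m * exp(-(c*u)) on Ioi 0
lemma integ_pow_exp (m : ℕ) {c : ℝ} (hc : 0 < c) :
    IntegrableOn (fun u : ℝ => u ^ m * Real.exp (-(c * u))) (Ioi 0) := by
  have h := integrableOn_rpow_mul_exp_neg_mul_rpow (p := 1) (s := (m : ℝ)) (b := c)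
    (lt_of_lt_of_le neg_one_lt_zero (Nat.cast_nonneg m)) one_pos hc
  refine h.congr_fun (fun u hu => ?_) measurableSet_Ioi
  dsimp only
  rw [Real.rpow_one, Real.rpow_natCast, neg_mul]

lemma gamma_int (m : ℕ) {c : ℝ} (hc : 0 < c) :
    ∫ u in Ioi (0:ℝ), u ^ m * Real.exp (-(c * u))
      = Real.Gamma (m + 1) / c ^ (m + 1) := by
  have h := Real.integral_rpow_mul_exp_neg_mul_Ioi (a := (m : ℝ) + 1) (r := c)
    (by positivity) hc
  rw [add_sub_cancel_right] at h
  have h2 : ∫ u in Ioi (0:ℝ), u ^ m * Real.exp (-(c * u))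
      = ∫ u in Ioi (0:ℝ), u ^ ((m : ℝ)) * Real.exp (-(c * u)) := by
    refine setIntegral_congr_fun measurableSet_Ioi (fun u hu => ?_)
    rw [Real.rpow_natCast]
  rw [h2, h]
  rw [show ((m : ℝ) + 1) = ((m + 1 : ℕ) : ℝ) by push_cast; ring, Real.rpow_natCast]
  rw [one_div, inv_pow, div_eq_mul_inv, mul_comm]

lemma quad_smear {n : ℕ} (lam : Fin n → ℝ) (hlam : ∀ i, 0 < lam i)
    (F : Fin n → Fin n → ℝ)
    (hF : ∀ y : Fin n → ℝ, 0 ≤ ∑ i, ∑ j, y i * y j * F i j) (m : ℕ) (x : Fin n → ℝ) :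
    0 ≤ ∑ i, ∑ j, x i * x j * (F i j / (lam i + lam j) ^ (m + 1)) := by
  have hΓ : 0 < Real.Gamma (m + 1) := Real.Gamma_pos_of_pos (by positivity)
  have hsum : ∀ i j : Fin n, 0 < lam i + lam j := fun i j => by
    have := hlam i; have := hlam j; linarith
  -- key integral identity
  have key : (∑ i, ∑ j, x i * x j * (F i j / (lam i + lam j) ^ (m + 1))) * Real.Gamma (m+1)
      = ∫ u in Ioi (0:ℝ), ∑ i, ∑ j,
          (x i * Real.exp (-(lam i * u))) * (x j * Real.exp (-(lam j * u))) * F i j * u ^ m := by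
    rw [MeasureTheory.integral_finset_sum]
    · rw [Finset.sum_mul]
      refine Finset.sum_congr rfl fun i _ => ?_
      rw [MeasureTheory.integral_finset_sum]
      · rw [Finset.sum_mul]
        refine Finset.sum_congr rfl fun j _ => ?_
        have hint : (fun u : ℝ => (x i * Real.exp (-(lam i * u))) *
            (x j * Real.exp (-(lam j * u))) * F i j * u ^ m)
            = fun u : ℝ => (x i * x j * F i j) * (u ^ m * Real.exp (-((lam i + lam j) * u))) := by
          funext u
          rw [show -((lam i + lam j)*u) = -(lam i*u) + -(lam j*u) by ring, Real.exp_add]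
          ring
        rw [hint, MeasureTheory.integral_const_mul, gamma_int m (hsum i j)]
        field_simp
      · intro j _
        have : (fun u : ℝ => (x i * Real.exp (-(lam i * u))) *
            (x j * Real.exp (-(lam j * u))) * F i j * u ^ m)
            = fun u : ℝ => (x i * x j * F i j) * (u ^ m * Real.exp (-((lam i + lam j) * u))) := by
          funext u; rw [show -((lam i + lam j)*u) = -(lam i*u) + -(lam j*u) by ring, Real.exp_add]; ring
        rw [this]
        exact (integ_pow_exp m (hsum i j)).const_mul _
    · intro i _
      apply MeasureTheory.integrable_finset_sum
      intro j _
      have : (fun u : ℝ => (x i * Real.exp (-(lam i * u))) *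
          (x j * Real.exp (-(lam j * u))) * F i j * u ^ m)
          = fun u : ℝ => (x i * x j * F i j) * (u ^ m * Real.exp (-((lam i + lam j) * u))) := by
        funext u; rw [show -((lam i + lam j)*u) = -(lam i*u) + -(lam j*u) by ring, Real.exp_add]; ring
      rw [this]
      exact (integ_pow_exp m (hsum i j)).const_mul _
  have hpos : 0 ≤ ∫ u in Ioi (0:ℝ), ∑ i, ∑ j,
      (x i * Real.exp (-(lam i * u))) * (x j * Real.exp (-(lam j * u))) * F i j * u ^ m := by
    refine setIntegral_nonneg measurableSet_Ioi fun u hu => ?_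
    have h1 : 0 ≤ ∑ i, ∑ j, (x i * Real.exp (-(lam i * u))) *
        (x j * Real.exp (-(lam j * u))) * F i j := hF _
    have h2 : (0:ℝ) ≤ u ^ m := pow_nonneg (le_of_lt hu) m
    calc (0:ℝ) = 0 * u ^ m := by ring
    _ ≤ (∑ i, ∑ j, (x i * Real.exp (-(lam i * u))) * (x j * Real.exp (-(lam j * u))) * F i j) * u ^ m :=
        mul_le_mul_of_nonneg_right h1 h2
    _ = _ := by rw [Finset.sum_mul]; exact Finset.sum_congr rfl fun i _ => by rw [Finset.sum_mul]
  nlinarith [key, hpos, hΓ]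


variable {r : ℝ}

lemma J_contOn (hr0 : 0 < r) {a : ℝ} (ha : 0 < a) :
    ContinuousOn (fun s : ℝ => s ^ (r-1) * (a / (a + s))) (Ioi 0) := by
  apply ContinuousOn.mul
  · exact fun s hs => (Real.continuousAt_rpow_const s (r-1) (Or.inl (ne_of_gt hs))).continuousWithinAt
  · apply ContinuousOn.div continuousOn_const (by fun_prop)
    intro s hs
    have : (0:ℝ) < s := hs
    positivity

lemma J_integrable (hr0 : 0 < r) (hr1 : r < 1) {a : ℝ} (ha : 0 < a) :
    IntegrableOn (fun s : ℝ => s ^ (r-1) * (a / (a + s))) (Ioi 0) := by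
  have hmeas : AEStronglyMeasurable (fun s : ℝ => s ^ (r-1) * (a / (a + s)))
      (volume.restrict (Ioi 0)) :=
    (J_contOn hr0 ha).aestronglyMeasurable measurableSet_Ioi
  have h1 : IntegrableOn (fun s : ℝ => s ^ (r-1) * (a / (a + s))) (Ioc 0 1) := by
    have hg : IntegrableOn (fun s : ℝ => s ^ (r-1)) (Ioc (0:ℝ) 1) := by
      rw [← intervalIntegrable_iff_integrableOn_Ioc_of_le zero_le_one]
      exact intervalIntegral.intervalIntegrable_rpow' (by linarith)
    refine hg.mono' (hmeas.mono_set Ioc_subset_Ioi_self) ?_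
    refine (ae_restrict_iff' measurableSet_Ioc).mpr (ae_of_all _ fun s hs => ?_)
    have hs0 : (0:ℝ) < s := hs.1
    have hfr : (0:ℝ) < a / (a + s) := by positivity
    have hle : a / (a + s) ≤ 1 := by
      rw [div_le_one (by linarith)]; linarith
    rw [Real.norm_eq_abs, abs_of_nonneg (by positivity)]
    calc s ^ (r-1) * (a / (a + s)) ≤ s ^ (r-1) * 1 :=
          mul_le_mul_of_nonneg_left hle (by positivity)
    _ = s ^ (r-1) := mul_one _
  have h2 : IntegrableOn (fun s : ℝ => s ^ (r-1) * (a / (a + s))) (Ioi 1) := by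
    have hg : IntegrableOn (fun s : ℝ => a * s ^ (r-2)) (Ioi (1:ℝ)) :=
      (integrableOn_Ioi_rpow_of_lt (by linarith) one_pos).const_mul a
    refine hg.mono' (hmeas.mono_set (Ioi_subset_Ioi zero_le_one)) ?_
    refine (ae_restrict_iff' measurableSet_Ioi).mpr (ae_of_all _ fun s hs => ?_)
    have hs1 : (1:ℝ) < s := hs
    have hs0 : (0:ℝ) < s := by linarith
    rw [Real.norm_eq_abs, abs_of_nonneg (by positivity)]
    have hle : a / (a + s) ≤ a / s := by
      apply div_le_div_of_nonneg_left (le_of_lt ha) hs0 (by linarith)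
    calc s ^ (r-1) * (a / (a + s)) ≤ s ^ (r-1) * (a / s) :=
          mul_le_mul_of_nonneg_left hle (by positivity)
    _ = a * (s ^ (r-1) * s⁻¹) := by ring
    _ = a * s ^ (r-2) := by
          rw [← Real.rpow_neg_one s, ← Real.rpow_add hs0, show r-1+-1 = r-2 by ring]
  have := h1.union h2
  rwa [Ioc_union_Ioi_eq_Ioi zero_le_one] at this

lemma J_eq (hr0 : 0 < r) {a : ℝ} (ha : 0 < a) :
    ∫ s in Ioi (0:ℝ), s ^ (r-1) * (a / (a + s))
      = a ^ r * ∫ s in Ioi (0:ℝ), s ^ (r-1) * (1 / (1 + s)) := by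
  have h := MeasureTheory.integral_comp_mul_left_Ioi
    (fun u : ℝ => u ^ (r-1) * (1 / (1 + u))) 0 (inv_pos.mpr ha)
  rw [mul_zero, inv_inv] at h
  have hL : ∫ x in Ioi (0:ℝ), (a⁻¹ * x) ^ (r-1) * (1 / (1 + a⁻¹ * x))
      = a ^ (1-r) * ∫ s in Ioi (0:ℝ), s ^ (r-1) * (a / (a + s)) := by
    rw [← MeasureTheory.integral_const_mul]
    refine setIntegral_congr_fun measurableSet_Ioi (fun x hx => ?_)
    have hx0 : (0:ℝ) < x := hx
    have h1 : (a⁻¹ * x) ^ (r-1) = a ^ (1-r) * x ^ (r-1) := by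
      rw [Real.mul_rpow (by positivity) (le_of_lt hx0),
        ← Real.rpow_neg_one a, ← Real.rpow_mul (le_of_lt ha)]
      rw [show (-1:ℝ) * (r-1) = 1 - r by ring]
    have h2 : 1 / (1 + a⁻¹ * x) = a / (a + x) := by
      rw [div_eq_div_iff (by positivity) (by positivity)]
      field_simp
    rw [h1, h2]; ring
  rw [hL] at h
  have hc : a ^ (1-r) ≠ 0 := ne_of_gt (Real.rpow_pos_of_pos ha _)
  apply mul_left_cancel₀ hc
  rw [h]
  rw [smul_eq_mul, ← mul_assoc, ← Real.rpow_add ha, show 1 - r + r = 1 by ring,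
    Real.rpow_one]

lemma I1_pos (hr0 : 0 < r) (hr1 : r < 1) :
    0 < ∫ s in Ioi (0:ℝ), s ^ (r-1) * (1 / (1 + s)) := by
  rw [setIntegral_pos_iff_support_of_nonneg_ae]
  · have : (Function.support fun s : ℝ => s ^ (r-1) * (1 / (1 + s))) ∩ Ioi 0 = Ioi 0 := by
      rw [inter_eq_right]
      intro s hs
      have hs0 : (0:ℝ) < s := hs
      rw [Function.mem_support]
      positivity
    rw [this, volume_Ioi]
    exact ENNReal.zero_lt_top
  · refine Filter.eventually_of_mem (self_mem_ae_restrict measurableSet_Ioi) fun s hs => ?_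
    have hs0 : (0:ℝ) < s := hs
    positivity
  · exact J_integrable hr0 hr1 one_pos


lemma cauchy_quad {n : ℕ} (lam : Fin n → ℝ) (hlam : ∀ i, 0 < lam i) (x : Fin n → ℝ) :
    0 ≤ ∑ i, ∑ j, x i * x j / (lam i + lam j) := by
  have hF : ∀ y : Fin n → ℝ, 0 ≤ ∑ i, ∑ j, y i * y j * (1:ℝ) := by
    intro y
    have : ∑ i, ∑ j, y i * y j * (1:ℝ) = (∑ i, y i)^2 := by
      rw [sq, Finset.sum_mul_sum]
      exact Finset.sum_congr rfl fun i _ => Finset.sum_congr rfl fun j _ => by ring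
    rw [this]; positivity
  have h := quad_smear lam hlam (fun _ _ => 1) hF 0 x
  refine le_trans h (le_of_eq ?_)
  refine Finset.sum_congr rfl fun i _ => Finset.sum_congr rfl fun j _ => ?_
  rw [zero_add, pow_one]; ring

lemma kwong_core {n : ℕ} (lam : Fin n → ℝ) (hlam : ∀ i, 0 < lam i)
    {r : ℝ} (hr0 : 0 < r) (hr1 : r < 1) (x : Fin n → ℝ) :
    0 ≤ ∑ i, ∑ j, x i * x j * ((lam i ^ r + lam j ^ r) / (lam i + lam j)) := by
  have hI1 := I1_pos hr0 hr1
  set I1 := ∫ s in Ioi (0:ℝ), s ^ (r-1) * (1/(1+s)) with hI1def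
  have hJint : ∀ i : Fin n, IntegrableOn (fun s : ℝ => s^(r-1) * (lam i/(lam i + s))) (Ioi 0) :=
    fun i => J_integrable hr0 hr1 (hlam i)
  have hJeq : ∀ i : Fin n, ∫ s in Ioi (0:ℝ), s^(r-1) * (lam i/(lam i + s)) = lam i ^ r * I1 :=
    fun i => J_eq hr0 (hlam i)
  have hij : ∀ i j : Fin n, 0 < lam i + lam j := fun i j => by
    have := hlam i; have := hlam j; linarith
  have hfint : ∀ i j : Fin n, Integrable
      (fun s : ℝ => (x i * x j/(lam i + lam j)) *
        (s^(r-1) * (lam i/(lam i + s)) + s^(r-1)*(lam j/(lam j + s))))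
      (volume.restrict (Ioi 0)) := fun i j => (((hJint i).add (hJint j)).const_mul _)
  have key : (∑ i, ∑ j, x i * x j * ((lam i ^ r + lam j ^ r)/(lam i + lam j))) * I1
      = ∫ s in Ioi (0:ℝ), ∑ i, ∑ j, (x i * x j/(lam i + lam j)) *
          (s^(r-1) * (lam i/(lam i + s)) + s^(r-1)*(lam j/(lam j + s))) := by
    rw [MeasureTheory.integral_finset_sum _
      (fun i _ => integrable_finset_sum _ (fun j _ => hfint i j))]
    rw [Finset.sum_mul]
    refine Finset.sum_congr rfl fun i _ => ?_
    rw [MeasureTheory.integral_finset_sum _ (fun j _ => hfint i j), Finset.sum_mul]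
    refine Finset.sum_congr rfl fun j _ => ?_
    rw [MeasureTheory.integral_const_mul, MeasureTheory.integral_add (hJint i) (hJint j),
      hJeq i, hJeq j]
    have h1 := (hij i j).ne'
    field_simp
  have hG : 0 ≤ ∫ s in Ioi (0:ℝ), ∑ i, ∑ j, (x i * x j/(lam i + lam j)) *
      (s^(r-1) * (lam i/(lam i + s)) + s^(r-1)*(lam j/(lam j + s))) := by
    refine setIntegral_nonneg measurableSet_Ioi fun s hs => ?_
    have hs0 : (0:ℝ) < s := hs
    have hsplit : ∀ i j : Fin n, (x i * x j/(lam i + lam j)) *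
        (s^(r-1) * (lam i/(lam i + s)) + s^(r-1)*(lam j/(lam j + s)))
        = s^(r-1) * s * ((x i/(lam i + s)) * (x j/(lam j + s)))
          + 2*s^(r-1) * ((x i * (lam i/(lam i+s))) * (x j * (lam j/(lam j+s))) / (lam i + lam j)) := by
      intro i j
      have h1 := (hij i j).ne'
      have h2 : lam i + s ≠ 0 := by have := hlam i; positivity
      have h3 : lam j + s ≠ 0 := by have := hlam j; positivity
      field_simp
      ring
    rw [show (∑ i, ∑ j, (x i * x j/(lam i + lam j)) *
        (s^(r-1) * (lam i/(lam i + s)) + s^(r-1)*(lam j/(lam j + s))))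
        = (∑ i, ∑ j, s^(r-1) * s * ((x i/(lam i + s)) * (x j/(lam j + s))))
          + ∑ i, ∑ j, 2*s^(r-1) * ((x i * (lam i/(lam i+s))) * (x j * (lam j/(lam j+s))) / (lam i + lam j))
      from by
        rw [← Finset.sum_add_distrib]
        refine Finset.sum_congr rfl fun i _ => ?_
        rw [← Finset.sum_add_distrib]
        exact Finset.sum_congr rfl fun j _ => hsplit i j]
    have hA : (∑ i, ∑ j, s^(r-1) * s * ((x i/(lam i + s)) * (x j/(lam j + s))))
        = s^(r-1) * s * (∑ i, x i/(lam i + s))^2 := by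
      rw [sq, Finset.sum_mul_sum, Finset.mul_sum]
      refine Finset.sum_congr rfl fun i _ => ?_
      rw [Finset.mul_sum]
    have hB : (∑ i, ∑ j, 2*s^(r-1) * ((x i * (lam i/(lam i+s))) * (x j * (lam j/(lam j+s))) / (lam i + lam j)))
        = 2*s^(r-1) * ∑ i, ∑ j, (x i * (lam i/(lam i+s))) * (x j * (lam j/(lam j+s))) / (lam i + lam j) := by
      rw [Finset.mul_sum]
      refine Finset.sum_congr rfl fun i _ => ?_
      rw [Finset.mul_sum]
    rw [hA, hB]
    have hc := cauchy_quad lam hlam (fun i => x i * (lam i/(lam i+s)))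
    have hsp : (0:ℝ) < s^(r-1) := Real.rpow_pos_of_pos hs0 _
    have e1 : (0:ℝ) ≤ s^(r-1) * s * (∑ i, x i/(lam i + s))^2 :=
      mul_nonneg (mul_nonneg hsp.le hs0.le) (sq_nonneg _)
    have e2 : (0:ℝ) ≤ 2*s^(r-1) * ∑ i, ∑ j,
        (x i * (lam i/(lam i+s))) * (x j * (lam j/(lam j+s))) / (lam i + lam j) :=
      mul_nonneg (by positivity) hc
    linarith
  nlinarith [key, hG, hI1]


lemma kwong_quad {n : ℕ} (lam : Fin n → ℝ) (hlam : ∀ i, 0 < lam i)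
    {r : ℝ} (hr : r ∈ Set.Icc (-1:ℝ) 1) (x : Fin n → ℝ) :
    0 ≤ ∑ i, ∑ j, x i * x j * ((lam i ^ r + lam j ^ r) / (lam i + lam j)) := by
  have hpos : ∀ r' : ℝ, 0 < r' → r' ≤ 1 → ∀ x : Fin n → ℝ,
      0 ≤ ∑ i, ∑ j, x i * x j * ((lam i ^ r' + lam j ^ r') / (lam i + lam j)) := by
    intro r' h0 h1 x
    rcases lt_or_eq_of_le h1 with h1' | rfl
    · exact kwong_core lam hlam h0 h1' x
    · have : ∀ i j : Fin n, x i * x j * ((lam i ^ (1:ℝ) + lam j ^ (1:ℝ)) / (lam i + lam j))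
          = x i * x j := by
        intro i j
        have hij : lam i + lam j ≠ 0 := by have := hlam i; have := hlam j; positivity
        rw [Real.rpow_one, Real.rpow_one, div_self hij, mul_one]
      calc (0:ℝ) ≤ (∑ i, x i)^2 := sq_nonneg _
      _ = ∑ i, ∑ j, x i * x j := by
          rw [sq, Finset.sum_mul_sum]
      _ = _ := Finset.sum_congr rfl fun i _ => Finset.sum_congr rfl fun j _ => (this i j).symm
  rcases lt_trichotomy r 0 with h0 | rfl | h0
  · -- r < 0 : reduce to -r
    have h := hpos (-r) (by linarith) (by linarith [hr.1]) (fun i => x i * lam i ^ r)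
    refine le_trans h (le_of_eq ?_)
    refine Finset.sum_congr rfl fun i _ => Finset.sum_congr rfl fun j _ => ?_
    have e : ∀ i j : Fin n, lam i ^ r * lam j ^ r * (lam i ^ (-r) + lam j ^ (-r))
        = lam i ^ r + lam j ^ r := by
      intro i j
      have hi := hlam i; have hj := hlam j
      rw [mul_add]
      rw [show lam i ^ r * lam j ^ r * lam i ^ (-r)
          = (lam i ^ r * lam i ^ (-r)) * lam j ^ r by ring,
        show lam i ^ r * lam j ^ r * lam j ^ (-r)
          = (lam j ^ r * lam j ^ (-r)) * lam i ^ r by ring,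
        ← Real.rpow_add hi, ← Real.rpow_add hj]
      simp [add_comm]
    have hij : lam i + lam j ≠ 0 := by have := hlam i; have := hlam j; positivity
    rw [← mul_div_assoc, ← mul_div_assoc, div_eq_div_iff hij hij]
    linear_combination (x i * x j * (lam i + lam j)) * e i j
  · -- r = 0
    have h := cauchy_quad lam hlam x
    have : ∑ i, ∑ j, x i * x j * ((lam i ^ (0:ℝ) + lam j ^ (0:ℝ)) / (lam i + lam j))
        = 2 * ∑ i, ∑ j, x i * x j / (lam i + lam j) := by
      rw [Finset.mul_sum]
      refine Finset.sum_congr rfl fun i _ => ?_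
      rw [Finset.mul_sum]
      refine Finset.sum_congr rfl fun j _ => ?_
      rw [Real.rpow_zero, Real.rpow_zero]
      ring
    rw [this]; linarith
  · exact hpos r h0 hr.2 x

lemma kwong_pow_quad {n : ℕ} (lam : Fin n → ℝ) (hlam : ∀ i, 0 < lam i)
    {r : ℝ} (hr : r ∈ Set.Icc (-1:ℝ) 1) (m : ℕ) (x : Fin n → ℝ) :
    0 ≤ ∑ i, ∑ j, x i * x j * ((lam i ^ r + lam j ^ r) / (lam i + lam j) ^ (m+1)) := by
  cases m with
  | zero =>
    have h := kwong_quad lam hlam hr x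
    refine le_trans h (le_of_eq ?_)
    exact Finset.sum_congr rfl fun i _ => Finset.sum_congr rfl fun j _ => by rw [pow_one]
  | succ k =>
    have h := quad_smear lam hlam
      (fun i j => (lam i ^ r + lam j ^ r) / (lam i + lam j))
      (fun y => kwong_quad lam hlam hr y) k x
    refine le_trans h (le_of_eq ?_)
    refine Finset.sum_congr rfl fun i _ => Finset.sum_congr rfl fun j _ => ?_
    rw [div_div, ← pow_succ']


end StmtThirteenAux

open MeasureTheory Real Set in

theorem stmt_13 {n : ℕ} (lam : Fin n → ℝ) (hlam : ∀ i, 0 < lam i)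
    (r t : ℝ) (hr : r ∈ Set.Icc (-1 : ℝ) 1) (ht : -2 < t ∧ t ≤ 2) :
    (Matrix.of fun i j : Fin n =>
      (lam i ^ r + lam j ^ r) / (lam i ^ 2 + t * lam i * lam j + lam j ^ 2)).PosSemidef := by
  have hden : ∀ i j : Fin n, 0 < lam i ^ 2 + t * lam i * lam j + lam j ^ 2 := by
    intro i j
    have hi := hlam i; have hj := hlam j
    nlinarith [sq_nonneg (lam i - lam j), mul_pos hi hj, ht.1]
  have hij : ∀ i j : Fin n, 0 < lam i + lam j := fun i j => by
    have := hlam i; have := hlam j; linarith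
  apply posSemidef_of_quad
  · intro i j
    simp only [Matrix.of_apply]
    rw [show lam j ^ 2 + t * lam j * lam i + lam i ^ 2
      = lam i ^ 2 + t * lam i * lam j + lam j ^ 2 by ring, add_comm (lam j ^ r)]
  · intro x
    -- geometric data
    set q : Fin n → Fin n → ℝ := fun i j => (2 - t) * lam i * lam j / (lam i + lam j)^2 with hqdef
    have hq0 : ∀ i j, 0 ≤ q i j := fun i j => by
      rw [hqdef]
      exact div_nonneg (by nlinarith [mul_pos (hlam i) (hlam j), ht.2]) (by positivity)
    have hq1 : ∀ i j, q i j < 1 := fun i j => by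
      rw [hqdef, div_lt_one (pow_pos (hij i j) 2)]
      nlinarith [hden i j]
    -- per-entry geometric expansion
    have hentry : ∀ i j : Fin n,
        x i * x j * (Matrix.of (fun i j : Fin n =>
          (lam i ^ r + lam j ^ r) / (lam i ^ 2 + t * lam i * lam j + lam j ^ 2)) i j)
        = ∑' k : ℕ, (x i * x j * ((lam i ^ r + lam j ^ r) / (lam i + lam j)^2)) * (q i j)^k := by
      intro i j
      rw [tsum_mul_left, tsum_geometric_of_lt_one (hq0 i j) (hq1 i j)]
      simp only [Matrix.of_apply]
      have hs : lam i + lam j ≠ 0 := (hij i j).ne'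
      have h1q : 1 - q i j = (lam i ^ 2 + t * lam i * lam j + lam j ^ 2) / (lam i + lam j)^2 := by
        rw [hqdef, eq_div_iff (pow_ne_zero 2 hs), sub_mul, one_mul,
          div_mul_cancel₀ _ (pow_ne_zero 2 hs)]
        ring
      rw [h1q, inv_div]
      have hd : lam i ^ 2 + t * lam i * lam j + lam j ^ 2 ≠ 0 := (hden i j).ne'
      have hS : (lam i + lam j)^2 ≠ 0 := pow_ne_zero 2 hs
      set D := lam i ^ 2 + t * lam i * lam j + lam j ^ 2 with hD
      set S := (lam i + lam j)^2 with hSdef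
      field_simp
    have hsummable : ∀ i j : Fin n, Summable (fun k : ℕ =>
        (x i * x j * ((lam i ^ r + lam j ^ r) / (lam i + lam j)^2)) * (q i j)^k) :=
      fun i j => (summable_geometric_of_lt_one (hq0 i j) (hq1 i j)).mul_left _
    calc (0:ℝ) ≤ ∑' k : ℕ, ∑ i, ∑ j,
        (x i * x j * ((lam i ^ r + lam j ^ r) / (lam i + lam j)^2)) * (q i j)^k := by
          refine tsum_nonneg fun k => ?_
          have hk := kwong_pow_quad lam hlam hr (2*k+1) (fun i => x i * lam i ^ k)
          refine le_trans (mul_nonneg (pow_nonneg (by linarith [ht.2] : (0:ℝ) ≤ 2 - t) k) hk)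
            (le_of_eq ?_)
          rw [Finset.mul_sum]
          refine Finset.sum_congr rfl fun i _ => ?_
          rw [Finset.mul_sum]
          refine Finset.sum_congr rfl fun j _ => ?_
          have hs : lam i + lam j ≠ 0 := (hij i j).ne'
          rw [hqdef]
          show (2-t)^k * (x i * lam i ^ k * (x j * lam j ^ k) *
              ((lam i ^ r + lam j ^ r) / (lam i + lam j) ^ (2*k+1+1)))
            = x i * x j * ((lam i ^ r + lam j ^ r) / (lam i + lam j)^2) *
              ((2 - t) * lam i * lam j / (lam i + lam j) ^ 2)^k
          rw [div_pow, ← pow_mul, mul_pow, mul_pow]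
          set P := lam i + lam j with hP
          have hPne : P ≠ 0 := hs
          field_simp
          ring
      _ = ∑ i, ∑ j, x i * x j * (Matrix.of (fun i j : Fin n =>
            (lam i ^ r + lam j ^ r) / (lam i ^ 2 + t * lam i * lam j + lam j ^ 2)) i j) := by
          rw [Summable.tsum_finsetSum (fun i _ => summable_sum fun j _ => hsummable i j)]
          refine Finset.sum_congr rfl fun i _ => ?_
          rw [Summable.tsum_finsetSum (fun j _ => hsummable i j)]
          exact Finset.sum_congr rfl fun j _ => (hentry i j).symm
end
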